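/- A finite ultrametric space (X, d) is isometrically embeddable in the n-dimensional Euclidean space \mathbb{R}^n if and only if |X| \le n + 1. -/

import Mathlib

def IsMetric {X : Type*} (d : X → X → ℝ) : Prop :=
  (∀ x y, d x y = 0 ↔ x = y) ∧ (∀ x y, d x y = d y x) ∧
  (∀ x y z, d x y ≤ d x z + d z y)

def IsUltrametric {X : Type*} (d : X → X → ℝ) : Prop :=
  IsMetric d ∧ ∀ x y z, d x y ≤ max (d x z) (d z y)

def Amenable (f : ℝ → ℝ) : Prop := f 0 = 0 ∧ ∀ x > 0, f x > 0

def MetricPreserving (f : ℝ → ℝ) : Prop :=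
  ∀ (X : Type) (d : X → X → ℝ), IsMetric d → IsMetric (fun x y => f (d x y))

def UltrametricPreserving (f : ℝ → ℝ) : Prop :=
  ∀ (X : Type) (d : X → X → ℝ), IsUltrametric d → IsUltrametric (fun x y => f (d x y))

def TriangleTriplet (a b c : ℝ) : Prop := a ≤ b + c ∧ b ≤ a + c ∧ c ≤ a + b

def StrongTriangleTriplet (a b c : ℝ) : Prop :=
  a ≤ max b c ∧ b ≤ max a c ∧ c ≤ max a b

/-!
The square of an ultrametric is of strictly negative type: if `∑ c = 0` and `c ≠ 0`, then
`∑ c x c y d(x,y)² < 0`. By induction on a finite set, split it at its diameter `r` into a ball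
of radius `< r` and the rest; the two parts lie at distance exactly `r` from each other.

If `Φ : X → ℝⁿ` is an isometry, then `∑ c x c y ‖Φ x - Φ y‖² = -2 ‖∑ c x • Φ x‖²` whenever
`∑ c = 0`, so negative type forces `Φ` to be affinely independent, hence `|X| ≤ n + 1`.
Conversely, by Schoenberg's argument negative type makes `(d(x₀,x)² + d(x₀,y)² - d(x,y)²) / 2`
positive semidefinite, hence the Gram matrix of an isometric embedding into some Euclidean space;
its affine span has dimension at most `|X| - 1 ≤ n`.
-/

open Finset Module
open scoped RealInnerProductSpace

section InnerProductSpace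

variable {ι E : Type*} [NormedAddCommGroup E] [InnerProductSpace ℝ E]

theorem sum_sum_mul_mul_norm_sub_sq (s : Finset ι) (w : ι → ℝ) (v : ι → E)
    (hw : ∑ i ∈ s, w i = 0) :
    ∑ i ∈ s, ∑ j ∈ s, w i * w j * ‖v i - v j‖ ^ 2 = -2 * ‖∑ i ∈ s, w i • v i‖ ^ 2 := by
  have hgram : ‖∑ i ∈ s, w i • v i‖ ^ 2 = ∑ i ∈ s, ∑ j ∈ s, w i * w j * ⟪v i, v j⟫ := by
    simp only [← real_inner_self_eq_norm_sq, sum_inner, inner_sum, real_inner_smul_left,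
      real_inner_smul_right]
    exact sum_congr rfl fun i _ => sum_congr rfl fun j _ => by rw [real_inner_comm]; ring
  calc ∑ i ∈ s, ∑ j ∈ s, w i * w j * ‖v i - v j‖ ^ 2
      = ∑ i ∈ s, ∑ j ∈ s, (w i * ‖v i‖ ^ 2 * w j + w i * (w j * ‖v j‖ ^ 2)
          - 2 * (w i * w j * ⟪v i, v j⟫)) :=
        sum_congr rfl fun i _ => sum_congr rfl fun j _ => by rw [norm_sub_sq_real]; ring
    _ = (∑ i ∈ s, w i * ‖v i‖ ^ 2) * ∑ j ∈ s, w j + (∑ i ∈ s, w i) * ∑ j ∈ s, w j * ‖v j‖ ^ 2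
          - 2 * ∑ i ∈ s, ∑ j ∈ s, w i * w j * ⟪v i, v j⟫ := by
        simp only [sum_add_distrib, sum_sub_distrib, ← mul_sum, ← sum_mul]
    _ = -2 * ‖∑ i ∈ s, w i • v i‖ ^ 2 := by rw [hw, hgram]; ring

theorem exists_linearIsometry_euclideanSpace_fin {V : Type*} [NormedAddCommGroup V]
    [InnerProductSpace ℝ V] [FiniteDimensional ℝ V] {n : ℕ} (h : finrank ℝ V ≤ n) :
    Nonempty (V →ₗᵢ[ℝ] EuclideanSpace ℝ (Fin n)) := by
  let b := stdOrthonormalBasis ℝ V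
  let e := EuclideanSpace.basisFun (Fin n) ℝ
  have he : Orthonormal ℝ (e ∘ Fin.castLE h) := e.orthonormal.comp _ (Fin.castLE_injective h)
  refine ⟨(b.toBasis.constr ℝ (e ∘ Fin.castLE h)).isometryOfOrthonormal
    (v := b.toBasis) (by rw [b.coe_toBasis]; exact b.orthonormal) ?_⟩
  convert he
  ext1 i
  simp

theorem exists_euclideanSpace_fin_dist_eq [Fintype ι] {n : ℕ} (p : ι → E)
    (h : Fintype.card ι ≤ n + 1) :
    ∃ q : ι → EuclideanSpace ℝ (Fin n), ∀ i j, dist (q i) (q j) = dist (p i) (p j) := by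
  rcases isEmpty_or_nonempty ι with hι | ⟨⟨i₀⟩⟩
  · exact ⟨isEmptyElim, isEmptyElim⟩
  obtain ⟨m, hm⟩ := Nat.exists_eq_succ_of_ne_zero (Fintype.card_pos_iff.2 ⟨i₀⟩).ne'
  obtain ⟨f⟩ := exists_linearIsometry_euclideanSpace_fin
    ((finrank_vectorSpan_range_le ℝ p hm).trans (by omega : m ≤ n))
  refine ⟨fun i => f ⟨p i -ᵥ p i₀, vsub_mem_vectorSpan ℝ (Set.mem_range_self i)
    (Set.mem_range_self i₀)⟩, fun i j => ?_⟩
  rw [dist_eq_norm, ← map_sub, f.norm_map, dist_eq_norm]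
  simp

end InnerProductSpace

theorem Matrix.PosSemidef.exists_eq_gram {n : Type*} [Fintype n] [DecidableEq n]
    {A : Matrix n n ℝ} (hA : A.PosSemidef) : ∃ v : n → EuclideanSpace ℝ n, A = gram ℝ v := by
  open scoped MatrixOrder in
  obtain ⟨C, rfl⟩ := CStarAlgebra.nonneg_iff_eq_star_mul_self.mp hA.nonneg
  refine ⟨fun j => WithLp.toLp 2 (fun k => C k j), ?_⟩
  ext i j
  simp [gram_apply, Matrix.mul_apply, Matrix.star_eq_conjTranspose, PiLp.inner_apply, mul_comm]

section

variable {X : Type*} {d : X → X → ℝ}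

lemma IsMetric.apply_self (hd : IsMetric d) (x : X) : d x x = 0 := (hd.1 x x).2 rfl

lemma IsMetric.nonneg (hd : IsMetric d) (x y : X) : 0 ≤ d x y := by
  linarith [hd.2.2 x x y, hd.apply_self x, hd.2.1 y x]

theorem exists_euclideanSpace_dist_eq_of_negType [Fintype X] (hd : IsMetric d)
    (hneg : ∀ c : X → ℝ, ∑ x, c x = 0 → ∑ x, ∑ y, c x * c y * d x y ^ 2 ≤ 0) :
    ∃ p : X → EuclideanSpace ℝ X, ∀ x y, dist (p x) (p y) = d x y := by
  classical
  rcases isEmpty_or_nonempty X with hX | ⟨⟨x₀⟩⟩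
  · exact ⟨isEmptyElim, isEmptyElim⟩
  -- for an isometric `p`, the Gram matrix of the vectors `p x - p x₀`
  let G : Matrix X X ℝ := Matrix.of fun x y => (d x₀ x ^ 2 + d x₀ y ^ 2 - d x y ^ 2) / 2
  have hG : G.PosSemidef := by
    rw [Matrix.posSemidef_iff_dotProduct_mulVec]
    refine ⟨?_, fun v => ?_⟩
    · ext x y
      simp [G, hd.2.1 x y, add_comm]
    · -- `c = v - (∑ v) • δ_{x₀}` has total mass zero, and `vᵀ G v = -(∑ c x c y d(x,y)²) / 2`
      have hc := hneg (fun x => v x - if x = x₀ then ∑ y, v y else 0) (by simp [sum_sub_distrib])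
      simp only [mul_sub, sub_mul, ite_mul, sum_mul, zero_mul, mul_ite, mul_sum, sum_sub_distrib,
        sum_ite_irrel, sum_const_zero, mul_zero, sum_ite_eq', mem_univ, if_true, hd.apply_self,
        zero_pow two_ne_zero, sub_zero, tsub_le_iff_right, zero_add] at hc
      have hsymm : ∑ x, ∑ y, v x * v y * d x x₀ ^ 2 = ∑ x, ∑ y, v x * v y * d x₀ x ^ 2 := by
        simp_rw [hd.2.1 _ x₀]
      have hswap : ∑ x, ∑ y, v y * v x * d x₀ x ^ 2 = ∑ x, ∑ y, v x * v y * d x₀ y ^ 2 := sum_comm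
      have hvGv : star v ⬝ᵥ G.mulVec v = (∑ x, ∑ y, v x * v y * d x₀ x ^ 2 +
          ∑ x, ∑ y, v x * v y * d x₀ y ^ 2 - ∑ x, ∑ y, v x * v y * d x y ^ 2) / 2 := by
        simp only [dotProduct, Matrix.mulVec, mul_sum, ← sum_add_distrib, ← sum_sub_distrib,
          sum_div]
        refine sum_congr rfl fun x _ => sum_congr rfl fun y _ => ?_
        simp only [G, Matrix.of_apply, Pi.star_apply, star_trivial]
        ring
      linarith
  obtain ⟨p, hp⟩ := hG.exists_eq_gram
  refine ⟨p, fun x y => (sq_eq_sq₀ dist_nonneg (hd.nonneg x y)).1 ?_⟩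
  have hpG : ∀ x y, ⟪p x, p y⟫ = (d x₀ x ^ 2 + d x₀ y ^ 2 - d x y ^ 2) / 2 := fun x y =>
    (congrFun₂ hp x y).symm
  rw [dist_eq_norm, norm_sub_sq_real, ← real_inner_self_eq_norm_sq, ← real_inner_self_eq_norm_sq,
    hpG, hpG, hpG, hd.apply_self, hd.apply_self]
  ring

namespace IsUltrametric

lemma apply_le_max (hd : IsUltrametric d) (a x y : X) : d x y ≤ max (d a x) (d a y) :=
  hd.1.2.1 a x ▸ hd.2 x y a

lemma apply_eq_of_apply_lt (hd : IsUltrametric d) {a x y : X} (h : d a x < d a y) :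
    d x y = d a y := by
  refine le_antisymm ((hd.apply_le_max a x y).trans (max_le h.le le_rfl)) ?_
  exact (le_max_iff.1 (hd.2 a y x)).resolve_left h.not_ge

theorem sum_sum_mul_mul_sq_le (hd : IsUltrametric d) (S : Finset X) (c : X → ℝ) {D ε : ℝ}
    (hD : ∀ x ∈ S, ∀ y ∈ S, d x y ≤ D) (hεD : ε ≤ D ^ 2)
    (hε : ∀ x ∈ S, ∀ y ∈ S, x ≠ y → ε ≤ d x y ^ 2) :
    ∑ x ∈ S, ∑ y ∈ S, c x * c y * d x y ^ 2 ≤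
      D ^ 2 * (∑ x ∈ S, c x) ^ 2 - ε * ∑ x ∈ S, c x ^ 2 := by
  induction S using Finset.strongInduction generalizing D with
  | H S ih =>
  obtain rfl | ⟨a, ha⟩ := S.eq_empty_or_nonempty
  · simp
  obtain ⟨b, hb, hab⟩ := S.exists_max_image (d a) ⟨a, ha⟩
  set r := d a b
  have hr : ∀ x ∈ S, ∀ y ∈ S, d x y ≤ r := fun x hx y hy =>
    (hd.apply_le_max a x y).trans (max_le (hab x hx) (hab y hy))
  obtain hr0 | hr0 := (hd.1.nonneg a b).eq_or_lt
  · obtain rfl : S = {a} := eq_singleton_iff_unique_mem.2 ⟨ha, fun x hx =>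
      ((hd.1.1 a x).1 (le_antisymm (hr0 ▸ hab x hx) (hd.1.nonneg a x))).symm⟩
    simp only [sum_singleton, hd.1.apply_self]
    nlinarith [sq_nonneg (c a)]
  suffices key : ∑ x ∈ S, ∑ y ∈ S, c x * c y * d x y ^ 2 ≤
      r ^ 2 * (∑ x ∈ S, c x) ^ 2 - ε * ∑ x ∈ S, c x ^ 2 by
    have : r ^ 2 ≤ D ^ 2 := pow_le_pow_left₀ hr0.le (hD a ha b hb) 2
    nlinarith [sq_nonneg (∑ x ∈ S, c x)]
  -- the ball of radius `r` around `a` splits `S` into `A` and `R`, at mutual distance `r`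
  set A := S.filter (fun x => d a x < r)
  set R := S.filter (fun x => ¬ d a x < r)
  have hεr : ε ≤ r ^ 2 := hε a ha b hb fun h => hr0.ne' (h ▸ hd.1.apply_self a)
  have hA := ih A (filter_ssubset.2 ⟨b, hb, lt_irrefl r⟩) (fun x hx y hy =>
    hr x (filter_subset _ _ hx) y (filter_subset _ _ hy)) hεr
    (fun x hx y hy => hε x (filter_subset _ _ hx) y (filter_subset _ _ hy))
  have hR := ih R (filter_ssubset.2 ⟨a, ha, by simpa [hd.1.apply_self] using hr0⟩)
    (fun x hx y hy => hr x (filter_subset _ _ hx) y (filter_subset _ _ hy)) hεr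
    (fun x hx y hy => hε x (filter_subset _ _ hx) y (filter_subset _ _ hy))
  have hcross : ∀ x ∈ A, ∀ y ∈ R, d x y = r := by
    intro x hx y hy
    rw [mem_filter] at hx hy
    have hay : d a y = r := le_antisymm (hab y hy.1) (not_lt.1 hy.2)
    exact hay ▸ hd.apply_eq_of_apply_lt (hay ▸ hx.2)
  have hcross' : ∀ x ∈ R, ∀ y ∈ A, d x y = r := fun x hx y hy =>
    hd.1.2.1 x y ▸ hcross y hy x hx
  have hsplit : ∀ f : X → ℝ, ∑ x ∈ S, f x = ∑ x ∈ A, f x + ∑ x ∈ R, f x := fun f =>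
    (sum_filter_add_sum_filter_not S _ f).symm
  have hAR : ∑ x ∈ A, ∑ y ∈ R, c x * c y * d x y ^ 2 =
      r ^ 2 * ((∑ x ∈ A, c x) * ∑ y ∈ R, c y) := by
    rw [sum_mul_sum, mul_sum]
    refine sum_congr rfl fun x hx => ?_
    rw [mul_sum]
    refine sum_congr rfl fun y hy => ?_
    rw [hcross x hx y hy]; ring
  have hRA : ∑ x ∈ R, ∑ y ∈ A, c x * c y * d x y ^ 2 =
      r ^ 2 * ((∑ x ∈ A, c x) * ∑ y ∈ R, c y) := by
    rw [sum_comm, sum_mul_sum, mul_sum]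
    refine sum_congr rfl fun x hx => ?_
    rw [mul_sum]
    refine sum_congr rfl fun y hy => ?_
    rw [hcross' y hy x hx]; ring
  simp only [hsplit, sum_add_distrib, hAR, hRA]
  linear_combination hA + hR

theorem sum_sum_mul_mul_sq_neg (hd : IsUltrametric d) {S : Finset X} {c : X → ℝ}
    (hc : ∑ x ∈ S, c x = 0) {a : X} (ha : a ∈ S) (hca : c a ≠ 0) :
    ∑ x ∈ S, ∑ y ∈ S, c x * c y * d x y ^ 2 < 0 := by
  have hoff : S.offDiag.Nonempty := by
    obtain ⟨b, hb, hba⟩ : ∃ b ∈ S, b ≠ a := by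
      by_contra! h
      exact hca (by rwa [sum_eq_single_of_mem a ha fun b hb hba => absurd (h b hb) hba] at hc)
    exact ⟨(b, a), mem_offDiag.2 ⟨hb, ha, hba⟩⟩
  obtain ⟨p, hp, hpmin⟩ := S.offDiag.exists_min_image (fun p => d p.1 p.2) hoff
  obtain ⟨q, hq, hqmax⟩ := S.offDiag.exists_max_image (fun p => d p.1 p.2) hoff
  rw [mem_offDiag] at hp hq
  have hpos : 0 < d p.1 p.2 :=
    (hd.1.nonneg _ _).lt_of_ne fun h => hp.2.2 ((hd.1.1 _ _).1 h.symm)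
  have hbound := hd.sum_sum_mul_mul_sq_le S c (D := d q.1 q.2) (ε := d p.1 p.2 ^ 2)
    (fun x hx y hy => by
      obtain rfl | hxy := eq_or_ne x y
      · simpa [hd.1.apply_self] using hd.1.nonneg q.1 q.2
      · exact hqmax (x, y) (mem_offDiag.2 ⟨hx, hy, hxy⟩))
    (pow_le_pow_left₀ hpos.le (hpmin q (mem_offDiag.2 hq)) 2)
    (fun x hx y hy hxy => pow_le_pow_left₀ hpos.le (hpmin (x, y) (mem_offDiag.2 ⟨hx, hy, hxy⟩)) 2)
  have hsq : 0 < ∑ x ∈ S, c x ^ 2 :=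
    (by positivity : 0 < c a ^ 2).trans_le (single_le_sum (fun x _ => sq_nonneg (c x)) ha)
  rw [hc] at hbound
  nlinarith [pow_pos hpos 2]

theorem sum_sum_mul_mul_sq_nonpos [Fintype X] (hd : IsUltrametric d) {c : X → ℝ}
    (hc : ∑ x, c x = 0) : ∑ x, ∑ y, c x * c y * d x y ^ 2 ≤ 0 := by
  obtain rfl | hc0 := eq_or_ne c 0
  · simp
  · obtain ⟨a, ha⟩ := Function.ne_iff.1 hc0
    exact (hd.sum_sum_mul_mul_sq_neg hc (mem_univ a) ha).le

theorem affineIndependent {E : Type*} [NormedAddCommGroup E] [InnerProductSpace ℝ E]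
    (hd : IsUltrametric d) {Φ : X → E} (hΦ : ∀ x y, dist (Φ x) (Φ y) = d x y) :
    AffineIndependent ℝ Φ := by
  rw [affineIndependent_iff]
  intro s w hw hwΦ
  by_contra! h
  obtain ⟨a, ha, hwa⟩ := h
  have hneg := hd.sum_sum_mul_mul_sq_neg hw ha hwa
  simp only [← hΦ, dist_eq_norm, sum_sum_mul_mul_norm_sub_sq s w Φ hw, hwΦ, norm_zero] at hneg
  norm_num at hneg

end IsUltrametric

end

theorem stmt19 (n : ℕ) (X : Type*) [Fintype X] (d : X → X → ℝ)
    (hd : IsUltrametric d) :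
    (∃ Φ : X → EuclideanSpace ℝ (Fin n),
      ∀ x y, dist (Φ x) (Φ y) = d x y) ↔ Fintype.card X ≤ n + 1 := by
  constructor
  · rintro ⟨Φ, hΦ⟩
    calc Fintype.card X ≤ finrank ℝ (vectorSpan ℝ (Set.range Φ)) + 1 :=
          (hd.affineIndependent hΦ).card_le_finrank_succ
      _ ≤ n + 1 := by simpa using Submodule.finrank_le (vectorSpan ℝ (Set.range Φ))
  · intro hcard
    obtain ⟨p, hp⟩ := exists_euclideanSpace_dist_eq_of_negType hd.1
      fun c hc => hd.sum_sum_mul_mul_sq_nonpos hc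
    obtain ⟨q, hq⟩ := exists_euclideanSpace_fin_dist_eq p hcard
    exact ⟨q, fun x y => (hq x y).trans (hp x y)⟩
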